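/- Let d ∈ {2, 3}, and let (v_n)_{n≥1} be functions on [0,∞) × ℝ^d satisfying the recursion v_n(t,z) = Σ_{k=1}^{n-1} ∫₀^t ∫ p_{t-s}(z - y) v_k(s,y) v_{n-k}(s,y) dy ds for n ≥ 2. If there are constants r, α, β ≥ 0 with |v₁(t,z)| ≤ r((t+α)^{1/2} + β) for all t ≥ 0 and z, then with c₁ = 1 and c_n = Σ_{k=1}^{n-1} c_k c_{n-k} for n ≥ 2, one has |v_n(t,z)| ≤ c_n r^n (t+α)^{(n-1)/2} ((t+α)^{1/2} + β)^{2n-1} for all n ≥ 1, t ≥ 0, z ∈ ℝ^d. -/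

import Mathlib

open MeasureTheory Real Filter Topology

noncomputable def heatKernel (d : ℕ) (t : ℝ) (y : EuclideanSpace ℝ (Fin d)) : ℝ :=
  (2 * Real.pi * t) ^ (-(d : ℝ) / 2) * Real.exp (-‖y‖ ^ 2 / (2 * t))

/-!
Strong induction on `n`, with the bound `|v n t z| ≤ c n * r ^ n * √(t + α) ^ (n - 1) *
(√(t + α) + β) ^ (2 * n - 1)`, whose right-hand side is nondecreasing in `t`. The heat kernel is a
probability density, so each Duhamel term `∫₀ᵗ ∫ p_{t-s}(z - y) v_k v_{n-k} dy ds` is at most `t`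
times the product of the bounds for `v_k` and `v_{n-k}` at time `t`; the inequality
`t ≤ √(t + α) (√(t + α) + β)` turns that product into the bound of index `n`, and the recursion for
`c` sums the coefficients `c k * c (n - k)` to `c n`.
-/

open Set

section HeatKernel

variable {d : ℕ} {t : ℝ}

lemma heatKernel_nonneg (ht : 0 ≤ t) (y : EuclideanSpace ℝ (Fin d)) : 0 ≤ heatKernel d t y := by
  unfold heatKernel
  have : 0 ≤ 2 * π * t := by positivity
  positivity

lemma integral_heatKernel (ht : 0 < t) : ∫ y, heatKernel d t y = 1 := by
  have hb : 0 < 1 / (2 * t) := by positivity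
  have hexp (y : EuclideanSpace ℝ (Fin d)) : -‖y‖ ^ 2 / (2 * t) = -(1 / (2 * t)) * ‖y‖ ^ 2 := by
    ring
  simp only [heatKernel, hexp, integral_const_mul, GaussianFourier.integral_rexp_neg_mul_sq_norm hb,
    finrank_euclideanSpace_fin]
  rw [show π / (1 / (2 * t)) = 2 * π * t by field_simp, ← rpow_add (by positivity)]
  ring_nf
  exact rpow_zero _

lemma integral_heatKernel_sub (ht : 0 < t) (z : EuclideanSpace ℝ (Fin d)) :
    ∫ y, heatKernel d t (z - y) = 1 := by
  rw [integral_sub_left_eq_self (heatKernel d t) volume z, integral_heatKernel ht]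

lemma abs_integral_heatKernel_mul_le (ht : 0 < t) (z : EuclideanSpace ℝ (Fin d))
    {f : EuclideanSpace ℝ (Fin d) → ℝ} {C : ℝ} (hf : ∀ y, |f y| ≤ C) :
    |∫ y, heatKernel d t (z - y) * f y| ≤ C := by
  have hint : Integrable fun y => heatKernel d t (z - y) * C :=
    (Integrable.of_integral_ne_zero (by simp [integral_heatKernel_sub ht z])).mul_const C
  rw [← norm_eq_abs]
  calc ‖∫ y, heatKernel d t (z - y) * f y‖
      ≤ ∫ y, heatKernel d t (z - y) * C := by
        refine norm_integral_le_of_norm_le hint (Eventually.of_forall fun y => ?_)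
        rw [norm_mul, norm_of_nonneg (heatKernel_nonneg ht.le _)]
        exact mul_le_mul_of_nonneg_left (hf y) (heatKernel_nonneg ht.le _)
    _ = C := by rw [integral_mul_const, integral_heatKernel_sub ht z, one_mul]

lemma abs_integral_Ioc_heatKernel_mul_le (ht : 0 ≤ t) (z : EuclideanSpace ℝ (Fin d))
    {f : ℝ → EuclideanSpace ℝ (Fin d) → ℝ} {C : ℝ} (hf : ∀ s ∈ Ioo 0 t, ∀ y, |f s y| ≤ C) :
    |∫ s in Ioc 0 t, ∫ y, heatKernel d (t - s) (z - y) * f s y| ≤ t * C := by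
  -- the endpoint `s = t`, where `heatKernel d 0` is a junk value, is a null set
  rw [← setIntegral_congr_set Ioo_ae_eq_Ioc, ← norm_eq_abs]
  calc _ ≤ C * volume.real (Ioo 0 t) :=
        norm_setIntegral_le_of_norm_le_const measure_Ioo_lt_top fun s hs =>
          abs_integral_heatKernel_mul_le (sub_pos.2 hs.2) z (hf s hs)
    _ = t * C := by rw [volume_real_Ioo_of_le ht, sub_zero, mul_comm]

end HeatKernel

lemma nonneg_of_convolution_recursion {c : ℕ → ℝ} (hc1 : c 1 = 1)
    (hc : ∀ n ≥ 2, c n = ∑ k ∈ Finset.Ico 1 n, c k * c (n - k)) : ∀ n ≥ 1, 0 ≤ c n := by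
  intro n
  induction n using Nat.strong_induction_on with
  | _ n ih =>
    intro hn
    obtain rfl | hn2 : n = 1 ∨ 2 ≤ n := by omega
    · simp [hc1]
    rw [hc n hn2]
    refine Finset.sum_nonneg fun k hk => ?_
    obtain ⟨hk1, hkn⟩ := Finset.mem_Ico.1 hk
    exact mul_nonneg (ih k hkn hk1) (ih (n - k) (by omega) (by omega))

noncomputable def envelope (r α β : ℝ) (n : ℕ) (t : ℝ) : ℝ :=
  r ^ n * √(t + α) ^ (n - 1) * (√(t + α) + β) ^ (2 * n - 1)

section Envelope

variable {r α β : ℝ}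

lemma envelope_nonneg (hr : 0 ≤ r) (hβ : 0 ≤ β) (n : ℕ) (t : ℝ) : 0 ≤ envelope r α β n t := by
  unfold envelope
  positivity

lemma envelope_mono (hr : 0 ≤ r) (hβ : 0 ≤ β) (n : ℕ) : Monotone (envelope r α β n) := by
  intro s t hst
  unfold envelope
  gcongr

lemma envelope_eq_rpow {t : ℝ} (ht : 0 ≤ t + α) {n : ℕ} (hn : 1 ≤ n) :
    envelope r α β n t =
      r ^ n * (t + α) ^ (((n : ℝ) - 1) / 2) * ((t + α) ^ ((1 : ℝ) / 2) + β) ^ (2 * n - 1) := by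
  have hexp : ((n : ℝ) - 1) / 2 = 1 / 2 * ((n - 1 : ℕ) : ℝ) := by
    rw [Nat.cast_sub hn]
    ring
  rw [envelope, hexp, rpow_mul ht, rpow_natCast, ← sqrt_eq_rpow]

lemma mul_envelope_mul_envelope_le (hr : 0 ≤ r) (hα : 0 ≤ α) (hβ : 0 ≤ β) {t : ℝ} (ht : 0 ≤ t)
    {k m : ℕ} (hk : 1 ≤ k) (hm : 1 ≤ m) :
    t * (envelope r α β k t * envelope r α β m t) ≤ envelope r α β (k + m) t := by
  obtain ⟨k, rfl⟩ := Nat.exists_eq_add_of_le' hk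
  obtain ⟨m, rfl⟩ := Nat.exists_eq_add_of_le' hm
  set a := √(t + α)
  have hta : t ≤ a * (a + β) := by
    have : a * a = t + α := mul_self_sqrt (by linarith)
    nlinarith [sqrt_nonneg (t + α)]
  have hcommon : 0 ≤ r ^ (k + m + 2) * a ^ (k + m) * (a + β) ^ (2 * k + 2 * m + 2) := by positivity
  calc t * (envelope r α β (k + 1) t * envelope r α β (m + 1) t)
      = t * (r ^ (k + m + 2) * a ^ (k + m) * (a + β) ^ (2 * k + 2 * m + 2)) := by
        simp only [envelope, show 2 * (k + 1) - 1 = 2 * k + 1 by omega,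
          show 2 * (m + 1) - 1 = 2 * m + 1 by omega, Nat.add_sub_cancel]
        ring
    _ ≤ a * (a + β) * (r ^ (k + m + 2) * a ^ (k + m) * (a + β) ^ (2 * k + 2 * m + 2)) :=
        mul_le_mul_of_nonneg_right hta hcommon
    _ = envelope r α β (k + 1 + (m + 1)) t := by
        simp only [envelope, show 2 * (k + 1 + (m + 1)) - 1 = 2 * k + 2 * m + 3 by omega,
          show k + 1 + (m + 1) - 1 = k + m + 1 by omega]
        ring

end Envelope

theorem cumulant_recursion_bound_general (d : ℕ)
    (v : ℕ → ℝ → EuclideanSpace ℝ (Fin d) → ℝ)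
    (c : ℕ → ℝ) (hc1 : c 1 = 1)
    (hc : ∀ n ≥ 2, c n = ∑ k ∈ Finset.Ico 1 n, c k * c (n - k))
    (r α β : ℝ) (hr : 0 ≤ r) (hα : 0 ≤ α) (hβ : 0 ≤ β)
    (hv1 : ∀ t : ℝ, 0 ≤ t → ∀ z, |v 1 t z| ≤ r * ((t + α) ^ ((1 : ℝ) / 2) + β))
    (hrec : ∀ n ≥ 2, ∀ t : ℝ, 0 ≤ t → ∀ z, v n t z =
      ∑ k ∈ Finset.Ico 1 n, ∫ s in Set.Ioc (0 : ℝ) t,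
        ∫ y, heatKernel d (t - s) (z - y) * (v k s y * v (n - k) s y)) :
    ∀ n ≥ 1, ∀ t : ℝ, 0 ≤ t → ∀ z,
      |v n t z| ≤ c n * r ^ n * (t + α) ^ (((n : ℝ) - 1) / 2) *
        ((t + α) ^ ((1 : ℝ) / 2) + β) ^ (2 * n - 1) := by
  have hc0 := nonneg_of_convolution_recursion hc1 hc
  suffices h : ∀ n ≥ 1, ∀ t : ℝ, 0 ≤ t → ∀ z, |v n t z| ≤ c n * envelope r α β n t by
    intro n hn t ht z
    simpa only [envelope_eq_rpow (by linarith : 0 ≤ t + α) hn, mul_assoc] using h n hn t ht z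
  intro n
  induction n using Nat.strong_induction_on with
  | _ n ih =>
    intro hn t ht z
    obtain rfl | hn2 : n = 1 ∨ 2 ≤ n := by omega
    · simpa [envelope, hc1, sqrt_eq_rpow] using hv1 t ht z
    have hbound {k : ℕ} (hk : 1 ≤ k) (hkn : k < n) (s : ℝ) (hs : s ∈ Ioo 0 t) (y) :
        |v k s y| ≤ c k * envelope r α β k t :=
      (ih k hkn hk s hs.1.le y).trans <| mul_le_mul_of_nonneg_left
        (envelope_mono hr hβ k hs.2.le) (hc0 k hk)
    rw [hrec n hn2 t ht z, hc n hn2, Finset.sum_mul]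
    refine (Finset.abs_sum_le_sum_abs _ _).trans (Finset.sum_le_sum fun k hk => ?_)
    obtain ⟨hk1, hkn⟩ := Finset.mem_Ico.1 hk
    calc _ ≤ t * ((c k * envelope r α β k t) * (c (n - k) * envelope r α β (n - k) t)) :=
          abs_integral_Ioc_heatKernel_mul_le ht z fun s hs y => by
            rw [abs_mul]
            exact mul_le_mul (hbound hk1 hkn s hs y) (hbound (by omega) (by omega) s hs y)
              (abs_nonneg _) (mul_nonneg (hc0 k hk1) (envelope_nonneg hr hβ k t))
      _ = c k * c (n - k) * (t * (envelope r α β k t * envelope r α β (n - k) t)) := by ring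
      _ ≤ c k * c (n - k) * envelope r α β n t := by
          refine mul_le_mul_of_nonneg_left ?_ (mul_nonneg (hc0 k hk1) (hc0 (n - k) (by omega)))
          simpa only [Nat.add_sub_cancel' hkn.le] using
            mul_envelope_mul_envelope_le hr hα hβ ht hk1 (Nat.sub_pos_of_lt hkn)

theorem cumulant_recursion_bound (d : ℕ) (hd : d = 2 ∨ d = 3)
    (v : ℕ → ℝ → EuclideanSpace ℝ (Fin d) → ℝ)
    (c : ℕ → ℝ) (hc1 : c 1 = 1)
    (hc : ∀ n ≥ 2, c n = ∑ k ∈ Finset.Ico 1 n, c k * c (n - k))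
    (r α β : ℝ) (hr : 0 ≤ r) (hα : 0 ≤ α) (hβ : 0 ≤ β)
    (hv1 : ∀ t : ℝ, 0 ≤ t → ∀ z, |v 1 t z| ≤ r * ((t + α) ^ ((1 : ℝ) / 2) + β))
    (hrec : ∀ n ≥ 2, ∀ t : ℝ, 0 ≤ t → ∀ z, v n t z =
      ∑ k ∈ Finset.Ico 1 n, ∫ s in Set.Ioc (0 : ℝ) t,
        ∫ y, heatKernel d (t - s) (z - y) * (v k s y * v (n - k) s y)) :
    ∀ n ≥ 1, ∀ t : ℝ, 0 ≤ t → ∀ z,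
      |v n t z| ≤ c n * r ^ n * (t + α) ^ (((n : ℝ) - 1) / 2) *
        ((t + α) ^ ((1 : ℝ) / 2) + β) ^ (2 * n - 1) :=
  cumulant_recursion_bound_general d v c hc1 hc r α β hr hα hβ hv1 hrec
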